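/- Let ξ̄ > 0, let g : [0,ξ̄] → [0,∞) be Lebesgue integrable, let y₀ ∈ ℝ, and define the nondecreasing absolutely continuous function y(ξ) = y₀ + ∫₀^ξ g(ζ) dζ. Then for every Lebesgue measurable set I ⊆ [0,ξ̄], the image y(I) is Lebesgue measurable and Leb(y(I)) = ∫_I g(ξ) dξ. -/

import Mathlib

/-!
Write `F x = c + ∫₀ˣ f` with `f ≥ 0` integrable. `F` is a continuous Stieltjes function whose
measure is `f dx`, and covering `A` by half-open intervals `(a, b]` covers `F(A)` by the intervals
`[F a, F b]`, so `Leb (F(A)) ≤ ∫_A f` for every `A`; in particular `F` maps null sets to null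
sets. By the Lebesgue differentiation theorem `F' = f` off a null set, and on a measurable set
where this holds the change of variables formula for monotone maps gives `Leb (F(s)) = ∫_s f`
together with the measurability of `F(s)`.
-/

open MeasureTheory Set Real

namespace StieltjesFunction

theorem volume_image_le_length (f : StieltjesFunction ℝ) (s : Set ℝ) :
    volume (f '' s) ≤ f.length s := by
  rw [f.length_eq]
  refine le_iInf₂ fun a b => le_iInf fun hs => ?_
  calc volume (f '' s) ≤ volume (Icc (f a) (f b)) := by
        refine measure_mono ?_
        rintro _ ⟨x, hx, rfl⟩
        have hx' : x ∈ Ioc a b := hs ⟨hx, notMem_botSet_of_lt (sub_one_lt x)⟩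
        exact ⟨f.mono hx'.1.le, f.mono hx'.2⟩
    _ = ENNReal.ofReal (f b - f a) := Real.volume_Icc

theorem volume_image_le_measure (f : StieltjesFunction ℝ) (s : Set ℝ) :
    volume (f '' s) ≤ f.measure s := by
  rw [← Measure.toOuterMeasure_apply, f.measure_def]
  change volume (f '' s) ≤ f.outer s
  rw [StieltjesFunction.outer, OuterMeasure.ofFunction_apply]
  refine le_iInf₂ fun t hst => ?_
  calc volume (f '' s) ≤ volume (⋃ i, f '' t i) := by
        rw [← image_iUnion]
        exact measure_mono (image_mono hst)
    _ ≤ ∑' i, volume (f '' t i) := measure_iUnion_le _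
    _ ≤ ∑' i, f.length (t i) := ENNReal.tsum_le_tsum fun i => f.volume_image_le_length (t i)

end StieltjesFunction

namespace MeasureTheory.Integrable

variable {f : ℝ → ℝ}

theorem integral_sub_integral_eq (hf : Integrable f) (a b : ℝ) :
    (∫ t in 0..b, f t) - ∫ t in 0..a, f t = ∫ t in a..b, f t :=
  intervalIntegral.integral_interval_sub_left hf.intervalIntegrable hf.intervalIntegrable

noncomputable def primitiveStieltjesFunction (hf : Integrable f) (hf0 : 0 ≤ f) (c : ℝ) :
    StieltjesFunction ℝ where
  toFun x := c + ∫ t in 0..x, f t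
  mono' a b hab := by
    have : 0 ≤ ∫ t in a..b, f t := intervalIntegral.integral_nonneg hab fun t _ => hf0 t
    linarith [hf.integral_sub_integral_eq a b]
  right_continuous' x :=
    ((continuous_const.add (hf.continuous_primitive 0)).continuousAt).continuousWithinAt

variable (hf : Integrable f) (hf0 : 0 ≤ f) (c : ℝ)

@[simp]
theorem primitiveStieltjesFunction_apply (x : ℝ) :
    hf.primitiveStieltjesFunction hf0 c x = c + ∫ t in 0..x, f t :=
  rfl

theorem measure_primitiveStieltjesFunction :
    (hf.primitiveStieltjesFunction hf0 c).measure =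
      volume.withDensity fun x => ENNReal.ofReal (f x) := by
  refine Measure.ext_of_Ioc _ _ fun a b hab => ?_
  rw [StieltjesFunction.measure_Ioc, withDensity_apply _ measurableSet_Ioc,
    ← ofReal_integral_eq_lintegral_ofReal hf.integrableOn (.of_forall hf0),
    ← intervalIntegral.integral_of_le hab.le, ← hf.integral_sub_integral_eq,
    primitiveStieltjesFunction_apply, primitiveStieltjesFunction_apply, add_sub_add_left_eq_sub]

theorem volume_image_primitiveStieltjesFunction_eq_zero {N : Set ℝ} (hN : volume N = 0) :
    volume (hf.primitiveStieltjesFunction hf0 c '' N) = 0 := by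
  refine le_antisymm ?_ zero_le
  calc _ ≤ (hf.primitiveStieltjesFunction hf0 c).measure N :=
        StieltjesFunction.volume_image_le_measure _ N
    _ = 0 := by
        rw [measure_primitiveStieltjesFunction]
        exact withDensity_absolutelyContinuous _ _ hN

theorem nullMeasurableSet_image_primitiveStieltjesFunction_and_volume_eq {A : Set ℝ}
    (hA : NullMeasurableSet A volume) :
    NullMeasurableSet (hf.primitiveStieltjesFunction hf0 c '' A) volume ∧
      volume (hf.primitiveStieltjesFunction hf0 c '' A) = ∫⁻ x in A, ENNReal.ofReal (f x) := by
  set F := hf.primitiveStieltjesFunction hf0 c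
  have hF' : ∀ᵐ x, HasDerivAt F (f x) x := by
    filter_upwards [LocallyIntegrable.ae_hasDerivAt_integral hf.locallyIntegrable] with x hx
    exact (hx 0).const_add c
  obtain ⟨E, hE_bad, hE, hE_null⟩ := exists_measurable_superset_of_null (ae_iff.1 hF')
  obtain ⟨s, hs_sub, hs, hs_ae⟩ := (hA.diff hE.nullMeasurableSet).exists_measurable_subset_ae_eq
  have hsA : s ⊆ A := hs_sub.trans sdiff_subset
  have hs_ae_A : s =ᵐ[volume] A := hs_ae.trans (sdiff_null_ae_eq_self hE_null)
  have hF's : ∀ x ∈ s, HasDerivWithinAt F (f x) s x := fun x hx =>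
    (not_not.1 fun h => (hs_sub hx).2 (hE_bad h)).hasDerivWithinAt
  have hrest : volume (F '' (A \ s)) = 0 :=
    hf.volume_image_primitiveStieltjesFunction_eq_zero hf0 c (ae_eq_set.1 hs_ae_A).2
  have hFA : F '' A = F '' s ∪ F '' (A \ s) := by rw [← image_union, union_sdiff_cancel hsA]
  rw [hFA]
  refine ⟨(hs.image_of_monotoneOn (F.mono.monotoneOn s)).nullMeasurableSet.union
    (.of_null hrest), ?_⟩
  rw [measure_congr (union_ae_eq_left_of_ae_eq_empty (ae_eq_empty.2 hrest)),
    ← lintegral_deriv_eq_volume_image_of_monotoneOn hs hF's (F.mono.monotoneOn s),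
    setLIntegral_congr hs_ae_A]

end MeasureTheory.Integrable

theorem stmt7 (ξbar : ℝ)
    (g : ℝ → ℝ)
    (hgnonneg : ∀ ξ ∈ Set.Icc (0:ℝ) ξbar, 0 ≤ g ξ)
    (hgint : IntegrableOn g (Set.Icc 0 ξbar))
    (y₀ : ℝ) (y : ℝ → ℝ)
    (hy : ∀ ξ : ℝ, y ξ = y₀ + ∫ ζ in (0:ℝ)..ξ, g ζ) :
    ∀ I : Set ℝ, I ⊆ Set.Icc 0 ξbar → NullMeasurableSet I volume →
      NullMeasurableSet (y '' I) volume ∧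
      volume (y '' I) = ∫⁻ ξ in I, ENNReal.ofReal (g ξ) := by
  intro I hI hI_meas
  set G := (Icc 0 ξbar).indicator g
  have hG : Integrable G := (integrable_indicator_iff measurableSet_Icc).2 hgint
  have hG0 : 0 ≤ G := indicator_nonneg hgnonneg
  have hyG : EqOn y (hG.primitiveStieltjesFunction hG0 y₀) (Icc 0 ξbar) := fun ξ hξ => by
    rw [hy, hG.primitiveStieltjesFunction_apply]
    congr 1
    refine intervalIntegral.integral_congr fun t ht => ?_
    rw [uIcc_of_le hξ.1] at ht
    exact (indicator_of_mem (show t ∈ Icc 0 ξbar from ⟨ht.1, ht.2.trans hξ.2⟩) g).symm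
  have hgG : ∫⁻ ξ in I, ENNReal.ofReal (g ξ) = ∫⁻ ξ in I, ENNReal.ofReal (G ξ) :=
    lintegral_congr_ae <| ae_restrict_of_ae_restrict_of_subset hI <|
      ae_restrict_of_forall_mem measurableSet_Icc fun ξ hξ => by simp [G, indicator_of_mem hξ]
  rw [(hyG.mono hI).image_eq, hgG]
  exact hG.nullMeasurableSet_image_primitiveStieltjesFunction_and_volume_eq hG0 y₀ hI_meas
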